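/- arXiv:2303.14833 — 2 statements merged into one kernel-verified Lean document; each statement's English description precedes it below -/
import Mathlib

section
/- Let p be a prime, a, b positive integers, and suppose the squarefree part c of ab satisfies legendreSym p (−c) = −1 and p ∤ ab. If n = a³x² + b³y² for integers x, y and p ∣ n, then p² ∣ n. -/
theorem stmt_9 (p : ℕ) [Fact p.Prime] (a b c m : ℕ)
    (ha : 0 < a) (hb : 0 < b) (hc : Squarefree c) (hcm : a * b = c * m ^ 2)
    (hleg : legendreSym p (-(c : ℤ)) = -1)
    (hab : ¬ (p : ℤ) ∣ ((a : ℤ) * b))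
    (x y n : ℤ)
    (hn : n = (a : ℤ) ^ 3 * x ^ 2 + (b : ℤ) ^ 3 * y ^ 2)
    (hpn : (p : ℤ) ∣ n) :
    (p : ℤ) ^ 2 ∣ n := by
  have hp : p.Prime := Fact.out
  have hpi : Prime (p : ℤ) := Nat.prime_iff_prime_int.mp hp
  have habc : (a : ℤ) * b = (c : ℤ) * (m : ℤ) ^ 2 := by exact_mod_cast hcm
  have hpa : ¬ (p : ℤ) ∣ (a : ℤ) := fun h => hab (h.mul_right _)
  have hpb : ¬ (p : ℤ) ∣ (b : ℤ) := fun h => hab (h.mul_left _)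
  have hpm : ¬ (p : ℤ) ∣ (m : ℤ) := by
    intro h
    exact hab (habc ▸ ((dvd_pow h two_ne_zero).mul_left _))
  have hmz : ((m : ℤ) : ZMod p) ≠ 0 := by
    rwa [Ne, ZMod.intCast_zmod_eq_zero_iff_dvd]
  have hlab : legendreSym p (-((a : ℤ) * b)) = -1 := by
    have h1 : (-((a : ℤ) * b)) = (-(c : ℤ)) * (m : ℤ) ^ 2 := by rw [habc]; ring
    rw [h1, legendreSym.mul, hleg, legendreSym.sq_one' (p := p) hmz, neg_one_mul]
  have hns : ¬ IsSquare ((-((a : ℤ) * b) : ℤ) : ZMod p) := legendreSym.eq_neg_one_iff p |>.mp hlab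
  have haz : (((a : ℤ)) : ZMod p) ≠ 0 := by rwa [Ne, ZMod.intCast_zmod_eq_zero_iff_dvd]
  have hbz : (((b : ℤ)) : ZMod p) ≠ 0 := by rwa [Ne, ZMod.intCast_zmod_eq_zero_iff_dvd]
  have key : (p : ℤ) ∣ x ∧ (p : ℤ) ∣ y := by
    by_cases hy : (p : ℤ) ∣ y
    · refine ⟨?_, hy⟩
      have h1 : (p : ℤ) ∣ (a : ℤ) ^ 3 * x ^ 2 := by
        have h2 : (a : ℤ) ^ 3 * x ^ 2 = n - (b : ℤ) ^ 3 * y ^ 2 := by rw [hn]; ring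
        rw [h2]
        exact dvd_sub hpn (Dvd.dvd.mul_left (hy.pow (by norm_num)) _)
      have h2 : (p : ℤ) ∣ x ^ 2 := by
        rcases hpi.dvd_mul.mp h1 with h | h
        · exact (hpa (hpi.dvd_of_dvd_pow h)).elim
        · exact h
      exact hpi.dvd_of_dvd_pow h2
    · exfalso
      apply hns
      have hyz : ((y : ℤ) : ZMod p) ≠ 0 := by rwa [Ne, ZMod.intCast_zmod_eq_zero_iff_dvd]
      have heq : (((a : ℤ)) : ZMod p) ^ 3 * (x : ZMod p) ^ 2
          + (((b : ℤ)) : ZMod p) ^ 3 * (y : ZMod p) ^ 2 = 0 := by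
        have h0 : ((n : ℤ) : ZMod p) = 0 := by
          rwa [ZMod.intCast_zmod_eq_zero_iff_dvd]
        rw [hn] at h0
        push_cast at h0 ⊢
        linear_combination h0
      have hcast : ((-((a : ℤ) * b) : ℤ) : ZMod p) = -((a : ZMod p) * (b : ZMod p)) := by
        push_cast; ring
      rw [hcast]
      push_cast at haz hbz hyz heq
      refine ⟨(a : ZMod p) ^ 2 * (x : ZMod p) * ((b : ZMod p) * (y : ZMod p))⁻¹, ?_⟩
      have hby : (b : ZMod p) * (y : ZMod p) ≠ 0 := mul_ne_zero hbz hyz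
      field_simp
      linear_combination (-1 : ZMod p) * heq
  obtain ⟨hx, hy⟩ := key
  rw [hn]
  exact dvd_add (Dvd.dvd.mul_left (pow_dvd_pow_of_dvd hx 2) _)
    (Dvd.dvd.mul_left (pow_dvd_pow_of_dvd hy 2) _)
end

section
/- Let P be a positive integer with exactly r prime factors (counted without multiplicity), each of which is at least N ≥ 4. Then ∑_{Q ∣ P, Q < P} τ(P/Q)·(P/Q)^{−1/2} ≤ (1 + 2/√N)^r − 1, where τ is the number-of-divisors function. -/
open Nat ArithmeticFunction Finset

noncomputable def fdiv : ArithmeticFunction ℝ :=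
  ⟨fun n => (n.divisors.card : ℝ) / Real.sqrt n, by simp⟩

lemma fdiv_apply (n : ℕ) : fdiv n = (n.divisors.card : ℝ) / Real.sqrt n := rfl

lemma fdiv_mult : fdiv.IsMultiplicative := by
  constructor
  · simp [fdiv_apply]
  · intro m n hmn
    simp only [fdiv_apply]
    rcases eq_or_ne m 0 with rfl | hm
    · simp
    rcases eq_or_ne n 0 with rfl | hn
    · simp
    rw [Nat.Coprime.card_divisors_mul hmn, Nat.cast_mul, Nat.cast_mul,
      Real.sqrt_mul (by positivity)]
    exact (div_mul_div_comm _ _ _ _).symm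

theorem stmt_10 (P N r : ℕ) (hP : 0 < P) (hsf : Squarefree P)
    (hr : r = P.primeFactors.card) (hN : 4 ≤ N)
    (hfac : ∀ p ∈ P.primeFactors, N ≤ p) :
    ∑ Q ∈ P.properDivisors, ((P / Q).divisors.card : ℝ) / Real.sqrt (P / Q)
      ≤ (1 + 2 / Real.sqrt N) ^ r - 1 := by
  have key : ∏ p ∈ P.primeFactors, (1 + fdiv p) = ∑ d ∈ P.divisors, fdiv d :=
    fdiv_mult.prodPrimeFactors_one_add_of_squarefree hsf
  have hdiv : ∑ d ∈ P.divisors, fdiv d = ∑ Q ∈ P.divisors, fdiv (P / Q) :=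
    (Nat.sum_div_divisors P fdiv).symm
  have hsplit : ∑ Q ∈ P.divisors, fdiv (P / Q)
      = fdiv (P / P) + ∑ Q ∈ P.properDivisors, fdiv (P / Q) := by
    rw [← Nat.cons_self_properDivisors hP.ne', Finset.sum_cons]
  have hPP : fdiv (P / P) = 1 := by
    rw [Nat.div_self hP]; simp [fdiv_apply]
  have heq : ∑ Q ∈ P.properDivisors, ((P / Q).divisors.card : ℝ) / Real.sqrt (P / Q)
      = ∏ p ∈ P.primeFactors, (1 + fdiv p) - 1 := by
    rw [key, hdiv, hsplit, hPP, add_sub_cancel_left]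
    refine Finset.sum_congr rfl fun Q hQ => ?_
    have hQd := (Nat.mem_properDivisors.mp hQ).1
    have hQ0 : 0 < Q := Nat.pos_of_mem_divisors (Nat.mem_divisors.mpr ⟨hQd, hP.ne'⟩)
    rw [fdiv_apply, Nat.cast_div hQd (by exact_mod_cast hQ0.ne')]
  rw [heq]
  have hbound : ∏ p ∈ P.primeFactors, (1 + fdiv p)
      ≤ (1 + 2 / Real.sqrt N) ^ r := by
    rw [hr, ← Finset.prod_const]
    apply Finset.prod_le_prod
    · intro p hp
      have : 0 ≤ fdiv p := by
        rw [fdiv_apply]; positivity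
      linarith
    · intro p hp
      have hpp : p.Prime := Nat.prime_of_mem_primeFactors hp
      have hNp : (N : ℝ) ≤ p := by exact_mod_cast hfac p hp
      have hN0 : (0:ℝ) < Real.sqrt N := Real.sqrt_pos.mpr (by positivity)
      have hsle : Real.sqrt N ≤ Real.sqrt p := Real.sqrt_le_sqrt hNp
      rw [fdiv_apply, hpp.divisors, Finset.card_insert_of_notMem (by simp [Ne.symm hpp.ne_one]),
        Finset.card_singleton]
      push_cast
      gcongr
  linarith
end
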